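/- Fix the symbol order 0 < (0,1) < 1 < ⋯ < ∞ on S = ω ∪ Ω ∪ {∞} and a tree T ⊆ Ω^{<ω}. For x a finite sequence over S in T⁺ and y ∈ T⁺ ∪ [T] with x <_lex y lexicographically, if there is no element of T⁺ ∪ [T] strictly between x and y, then: letting ρ ∈ T be the longest common T-prefix with ρ⌢t_x ⪯ x and ρ⌢t_y ⪯ y, either t_y is the immediate successor of t_x in S with ρ⌢t_y ∉ T, or x ends with (n,n+1)⌢∞ and y continues with (n+1), or x continues with n and y ends with (n,n+1)⌢0 — i.e., successor pairs in the lexicographic order L_T = T⁺ ∪ [T] have one of these three explicit forms. -/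
import Mathlib


/-- The symbols `ω ∪ Ω ∪ {∞}`: `fin n` is the natural number `n`, `pair n` is the
pair `(n, n+1) ∈ Ω`, and `infty` is `∞`. -/
inductive Symb : Type
  | fin : ℕ → Symb
  | pair : ℕ → Symb
  | infty : Symb
deriving DecidableEq

/-- Position of a symbol in the order `0 < (0,1) < 1 < (1,2) < 2 < ⋯ < ∞`. -/
def Symb.val : Symb → WithTop ℕ
  | .fin n => ((2 * n : ℕ) : WithTop ℕ)
  | .pair n => ((2 * n + 1 : ℕ) : WithTop ℕ)
  | .infty => ⊤

theorem Symb.val_injective : Function.Injective Symb.val := by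
  rintro (n | n | _) (m | m | _) h <;>
    simp only [Symb.val] at h <;>
    first
      | rfl
      | (norm_cast at h <;> first | (congr 1; omega) | (exact absurd h (by omega)))

/-- The linear order `0 < (0,1) < 1 < (1,2) < 2 < ⋯ < ∞` on `ω ∪ Ω ∪ {∞}`. -/
instance : LinearOrder Symb := LinearOrder.lift' Symb.val Symb.val_injective

/-- A tree: a set of finite sequences closed under initial segments. -/
def IsTree {α : Type*} (T : Set (List α)) : Prop :=
  ∀ σ ∈ T, ∀ τ : List α, τ <+: σ → τ ∈ T

/-- `T⁺ = {σ⌢a : σ ∈ T, σ⌢a ∉ T}`, `a` ranging over symbols of `S = ω ∪ Ω ∪ {∞}`. -/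
def Tplus (T : Set (List Symb)) : Set (List Symb) :=
  {l : List Symb | ∃ σ ∈ T, ∃ a : Symb, l = σ ++ [a] ∧ σ ++ [a] ∉ T}

/-- Elements of `L_T = T⁺ ∪ [T]`: finite sequences or infinite paths of symbols. -/
abbrev LTel : Type := List Symb ⊕ (ℕ → Symb)

/-- The underlying (possibly finite) sequence of an element of `L_T`. -/
def LTel.toSeq : LTel → ℕ → Option Symb
  | .inl l => fun i => l[i]?
  | .inr f => fun i => some (f i)

/-- Membership in `L_T = T⁺ ∪ [T]`. -/
def memLT (T : Set (List Symb)) : LTel → Prop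
  | .inl l => l ∈ Tplus T
  | .inr f => ∀ n : ℕ, List.ofFn (fun i : Fin n => f i) ∈ T

/-- The strict lexicographic order on `L_T` (defined via the first difference; elements
of `L_T` are never proper prefixes of one another). -/
def ltLT (u v : LTel) : Prop :=
  ∃ n : ℕ, (∀ i < n, u.toSeq i = v.toSeq i) ∧
    ∃ a b : Symb, u.toSeq n = some a ∧ v.toSeq n = some b ∧ a < b

/-- `l` is an initial segment of the element `y` of `L_T`. -/
def prefixLT (l : List Symb) : LTel → Prop
  | .inl m => l <+: m
  | .inr f => ∀ i : ℕ, ∀ h : i < l.length, f i = l.get ⟨i, h⟩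

/-- The immediate successor in the symbol order `0 < (0,1) < 1 < (1,2) < ⋯`:
the successor of `n` is `(n, n+1)` and the successor of `(n, n+1)` is `n+1`
(`∞` has no successor; it is sent to itself as a junk value). -/
def symSucc : Symb → Symb
  | .fin n => .pair n
  | .pair n => .fin (n + 1)
  | .infty => .infty

lemma Symb.lt_iff (a b : Symb) : a < b ↔ a.val < b.val := Iff.rfl
lemma Symb.le_iff (a b : Symb) : a ≤ b ↔ a.val ≤ b.val := Iff.rfl

lemma symSucc_le {a b : Symb} (h : a < b) : symSucc a ≤ b := by
  rcases a with m|m|_ <;> rcases b with k|k|_ <;>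
    simp only [Symb.lt_iff, Symb.le_iff, Symb.val, symSucc] at * <;>
    first
      | exact le_top
      | exact absurd h not_top_lt
      | (norm_cast at h ⊢ <;> omega)

lemma fin0_le (c : Symb) : Symb.fin 0 ≤ c := by
  rcases c with k|k|_ <;> simp only [Symb.le_iff, Symb.val] <;>
    first | exact le_top | (norm_cast; omega)

lemma ne_infty_of_lt {a b : Symb} (h : a < b) : a ≠ Symb.infty := by
  rintro rfl; exact not_top_lt ((Symb.lt_iff _ _).mp h)

lemma lt_symSucc {a b : Symb} (h : a < b) : a < symSucc a := by
  rcases a with m|m|_ <;>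
    first
      | (simp only [Symb.lt_iff, Symb.val, symSucc]; norm_cast <;> omega)
      | exact absurd rfl (ne_infty_of_lt h)

lemma fin0_lt {c : Symb} (h : c ≠ Symb.fin 0) : Symb.fin 0 < c :=
  lt_of_le_of_ne (fin0_le c) (Ne.symm h)


/-- successor pairs of the lexicographic order `L_T = T⁺ ∪ [T]` have one of
three explicit forms.  If `x ∈ T⁺`, `y ∈ T⁺ ∪ [T]`, `x <_lex y` and no element of
`T⁺ ∪ [T]` lies strictly between them, then for the longest common `T`-prefix `ρ`, with
`ρ⌢t_x ⪯ x` and `ρ⌢t_y ⪯ y`, either `t_y` is the immediate symbol successor of `t_x` and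
`ρ⌢t_y ∉ T`, or `x = ρ⌢(n,n+1)⌢∞` and `t_y = n+1`, or `t_x = n` and
`y = ρ⌢(n,n+1)⌢0`. -/
theorem successor_pairs_in_LT (T : Set (List Symb)) (hTree : IsTree T)
    (hdom : ∀ σ ∈ T, ∀ s ∈ σ, ∃ n : ℕ, s = Symb.pair n)
    (x : List Symb) (hx : x ∈ Tplus T)
    (y : LTel) (hy : memLT T y)
    (hlt : ltLT (Sum.inl x) y)
    (hsucc : ¬ ∃ z : LTel, memLT T z ∧ ltLT (Sum.inl x) z ∧ ltLT z y) :
    ∃ ρ ∈ T, ∃ tx ty : Symb,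
      (ρ ++ [tx]) <+: x ∧ prefixLT (ρ ++ [ty]) y ∧
      ((tx ≠ Symb.infty ∧ ty = symSucc tx ∧ ρ ++ [ty] ∉ T) ∨
       (∃ n : ℕ, tx = Symb.pair n ∧ x = ρ ++ [Symb.pair n, Symb.infty] ∧
          ty = Symb.fin (n + 1)) ∨
       (∃ n : ℕ, tx = Symb.fin n ∧ ty = Symb.pair n ∧
          y = Sum.inl (ρ ++ [Symb.pair n, Symb.fin 0]))) := by
  obtain ⟨n, hagree, a, b, hxa, hyb, hab⟩ := hlt
  replace hxa : x[n]? = some a := hxa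
  replace hagree : ∀ i < n, x[i]? = y.toSeq i := hagree
  obtain ⟨hnx, hxn⟩ : ∃ h : n < x.length, x[n] = a := List.getElem?_eq_some_iff.mp hxa
  set ρ := x.take n with hρdef
  have hρlen : ρ.length = n := by simp [hρdef, List.length_take]; omega
  -- ρ ++ [a] is a prefix of x
  have hpx : ρ ++ [a] <+: x := by
    have h1 : x.take (n + 1) = ρ ++ [a] := by
      rw [List.take_succ, hxa]; rfl
    exact h1 ▸ List.take_prefix _ _
  -- ρ ∈ T
  have hρT : ρ ∈ T := by
    obtain ⟨σ, hσT, c, hxc, _⟩ := hx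
    refine hTree σ hσT ρ ?_
    refine List.prefix_of_prefix_length_le (List.take_prefix _ _) ⟨[c], hxc.symm⟩ ?_
    have : x.length = σ.length + 1 := by rw [hxc]; simp
    omega
  -- lists containing a `fin` symbol are not in T
  have hfin_not : ∀ (l : List Symb) (k : ℕ), Symb.fin k ∈ l → l ∉ T := by
    intro l k hm hl
    obtain ⟨j, hj⟩ := hdom l hl _ hm
    exact Symb.noConfusion hj
  -- getElem? computations for lists of the form ρ ++ tail
  have hget_ρ : ∀ (tail : List Symb) (i : ℕ), i < n → (ρ ++ tail)[i]? = x[i]? := by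
    intro tail i hi
    rw [List.getElem?_append, if_pos (by omega), hρdef, List.getElem?_take, if_pos hi]
  have hget_n : ∀ (s : Symb) (tail : List Symb), (ρ ++ s :: tail)[n]? = some s := by
    intro s tail
    rw [List.getElem?_append, if_neg (by omega)]
    simp [hρlen]
  have hget_n1 : ∀ (s t : Symb) (tail : List Symb),
      (ρ ++ s :: t :: tail)[n + 1]? = some t := by
    intro s t tail
    rw [List.getElem?_append, if_neg (by omega)]
    have h1 : n + 1 - ρ.length = 1 := by omega
    rw [h1]; simp
  -- ltLT constructors
  have hltx : ∀ (s : Symb) (tail : List Symb), a < s →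
      ltLT (Sum.inl x) (Sum.inl (ρ ++ s :: tail)) := by
    intro s tail has
    exact ⟨n, fun i hi => ((hget_ρ _ i hi).symm : x[i]? = _),
      a, s, hxa, hget_n s tail, has⟩
  have hlty : ∀ (s : Symb) (tail : List Symb), s < b →
      ltLT (Sum.inl (ρ ++ s :: tail)) y := by
    intro s tail hsb
    exact ⟨n, fun i hi => (hget_ρ _ i hi).trans (hagree i hi),
      s, b, hget_n s tail, hyb, hsb⟩
  -- membership constructors
  have hmem1 : ∀ s : Symb, ρ ++ [s] ∉ T → memLT T (Sum.inl (ρ ++ [s])) :=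
    fun s h => ⟨ρ, hρT, s, rfl, h⟩
  have hmem2 : ∀ s : Symb, ρ ++ [s] ∈ T → memLT T (Sum.inl (ρ ++ [s, Symb.fin 0])) := by
    intro s h
    exact ⟨ρ ++ [s], h, Symb.fin 0, by simp, hfin_not _ 0 (by simp)⟩
  -- the prefix of y
  have hpy : prefixLT (ρ ++ [b]) y := by
    cases y with
    | inl l =>
      show ρ ++ [b] <+: l
      replace hyb : l[n]? = some b := hyb
      obtain ⟨hnl, _⟩ := List.getElem?_eq_some_iff.mp hyb
      have h1 : l.take (n + 1) = ρ ++ [b] := by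
        apply List.ext_getElem?
        intro i
        rw [List.getElem?_take]
        rcases Nat.lt_trichotomy i n with h | h | h
        · rw [if_pos (by omega), hget_ρ [b] i h]
          exact (hagree i h).symm
        · subst h; rw [if_pos (by omega), hget_n, hyb]
        · rw [if_neg (by omega), List.getElem?_eq_none (by simp; omega)]
      exact h1 ▸ List.take_prefix _ _
    | inr f =>
      intro i hi
      have hil : i < n + 1 := by simpa [hρlen] using hi
      have hkey : (ρ ++ [b])[i]? = some (f i) := by
        rcases Nat.lt_or_ge i n with h | h
        · exact ((hget_ρ [b] i h).trans (hagree i h) :)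
        · have hin : i = n := by omega
          rw [hin, hget_n b []]
          exact (hyb.symm :)
      have h3 : (ρ ++ [b])[i]? = some ((ρ ++ [b]).get ⟨i, hi⟩) :=
        List.getElem?_eq_getElem hi
      rw [hkey] at h3
      exact Option.some_injective _ h3
  have hainf : a ≠ Symb.infty := ne_infty_of_lt hab
  rcases (symSucc_le hab).lt_or_eq with hlt2 | heq
  · -- something strictly between a and b exists in the symbol order: contradiction
    exfalso; apply hsucc
    by_cases hsT : ρ ++ [symSucc a] ∈ T
    · exact ⟨_, hmem2 _ hsT, hltx (symSucc a) [Symb.fin 0] (lt_symSucc hab),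
        hlty (symSucc a) [Symb.fin 0] hlt2⟩
    · exact ⟨_, hmem1 _ hsT, hltx (symSucc a) [] (lt_symSucc hab),
        hlty (symSucc a) [] hlt2⟩
  · by_cases hbT : ρ ++ [b] ∈ T
    · -- b is a pair, a = fin m, and y must be ρ ++ [pair m, fin 0]
      obtain ⟨m, hm⟩ := hdom _ hbT b (by simp)
      have ha : a = Symb.fin m := by
        rw [hm] at heq
        rcases a with j|j|_ <;> simp only [symSucc] at heq
        · cases heq; rfl
        · exact Symb.noConfusion heq
        · exact Symb.noConfusion heq
      have hagree1 : ∀ i < n + 1,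
          (ρ ++ [Symb.pair m, Symb.fin 0])[i]? = y.toSeq i := by
        intro i hi
        rcases Nat.lt_or_ge i n with h | h
        · exact (hget_ρ _ i h).trans (hagree i h)
        · have h' : i = n := by omega
          subst h'
          rw [hget_n, hyb, hm]
      have hxltw : ltLT (Sum.inl x) (Sum.inl (ρ ++ [Symb.pair m, Symb.fin 0])) :=
        hltx (Symb.pair m) [Symb.fin 0] (hm ▸ heq ▸ lt_symSucc hab)
      have hmemw : memLT T (Sum.inl (ρ ++ [Symb.pair m, Symb.fin 0])) :=
        hmem2 _ (hm ▸ hbT)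
      have hyw : y = Sum.inl (ρ ++ [Symb.pair m, Symb.fin 0]) := by
        cases y with
        | inr f =>
          exfalso
          have hT2 := hy (n + 2)
          have hmem : f (n + 1) ∈ List.ofFn (fun i : Fin (n + 2) => f i) := by
            rw [List.mem_ofFn]
            exact ⟨⟨n + 1, by omega⟩, rfl⟩
          obtain ⟨k, hk⟩ := hdom _ hT2 _ hmem
          apply hsucc
          refine ⟨_, hmemw, hxltw, n + 1, hagree1, Symb.fin 0, Symb.pair k,
            hget_n1 _ _ _, ?_, fin0_lt (fun h => Symb.noConfusion h)⟩
          show some (f (n + 1)) = some (Symb.pair k)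
          rw [hk]
        | inl l =>
          obtain ⟨τ, hτT, d, hld, hlnT⟩ := hy
          replace hyb : l[n]? = some b := hyb
          obtain ⟨hnl, _⟩ := List.getElem?_eq_some_iff.mp hyb
          have hlen1 : n + 1 < l.length := by
            by_contra h
            push_neg at h
            have hleq : l.length = n + 1 := by omega
            have hlρ : l = ρ ++ [b] := by
              apply List.ext_getElem?
              intro i
              rcases Nat.lt_trichotomy i n with h' | h' | h'
              · exact (((hget_ρ [b] i h').trans (hagree i h')).symm :)
              · subst h'; rw [hyb, hget_n]
              · rw [List.getElem?_eq_none (by omega),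
                  List.getElem?_eq_none (by simp; omega)]
            rw [hld] at hlρ
            exact hlnT (by rw [hlρ]; exact hbT)
          by_cases hc : l[n + 1]'hlen1 = Symb.fin 0
          · -- y is exactly ρ ++ [pair m, fin 0]
            have hτlen : τ.length ≤ n + 1 := by
              by_contra h
              push_neg at h
              have h2 : l[n + 1]? = some (Symb.fin 0) := by
                rw [List.getElem?_eq_getElem hlen1, hc]
              have h3 : l[n + 1]? = τ[n + 1]? := by
                rw [hld, List.getElem?_append, if_pos h]
              obtain ⟨hh, he⟩ := List.getElem?_eq_some_iff.mp (h3.symm.trans h2)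
              exact hfin_not τ 0 (he ▸ List.getElem_mem hh) hτT
            have hlen2 : l.length = n + 2 := by
              have : l.length = τ.length + 1 := by rw [hld]; simp
              omega
            congr 1
            apply List.ext_getElem?
            intro i
            rcases Nat.lt_trichotomy i n with h' | h' | h'
            · exact (((hget_ρ _ i h').trans (hagree i h')).symm :)
            · subst h'; rw [hyb, hget_n, hm]
            · rcases Nat.lt_trichotomy i (n + 1) with h'' | h'' | h''
              · omega
              · subst h''
                rw [List.getElem?_eq_getElem hlen1, hc, hget_n1]
              · rw [List.getElem?_eq_none (by omega),
                  List.getElem?_eq_none (by simp; omega)]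
          · exfalso
            apply hsucc
            refine ⟨_, hmemw, hxltw, n + 1, hagree1, Symb.fin 0, l[n + 1]'hlen1,
              hget_n1 _ _ _, List.getElem?_eq_getElem hlen1, fin0_lt hc⟩
      refine ⟨ρ, hρT, a, b, hpx, hpy, Or.inr (Or.inr ⟨m, ha, hm, ?_⟩)⟩
      exact hyw
    · exact ⟨ρ, hρT, a, b, hpx, hpy, Or.inl ⟨hainf, heq.symm, hbT⟩⟩
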